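/- arXiv:1303.2173 — 3 statements merged into one kernel-verified Lean document; each statement's English description precedes it below -/
import Mathlib

section
/- For $\lambda>0$, $d>0$, $\alpha>2$, the expected maximum rate $\mathbb{E}[R^*(\lambda)] = \int_0^\infty \log_2(1+x)\frac{2\lambda\pi d^2 x^{2/\alpha}}{\alpha x} e^{-\lambda\pi d^2 x^{2/\alpha}}dx$ is a strictly decreasing function of $\lambda$. -/
open Real MeasureTheory Set Filter

private lemma aux_integrable (α c : ℝ) (hα : 2 < α) (hc : 0 < c) :
    IntegrableOn (fun u : ℝ => Real.logb 2 (1 + (u / c) ^ (α / 2)) * Real.exp (-u))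
      (Set.Ioi 0) := by
  have hlog2 : (0:ℝ) < Real.log 2 := Real.log_pos one_lt_two
  have hGamma : IntegrableOn (fun x : ℝ => Real.exp (-x) * x ^ (α / 2)) (Set.Ioi 0) := by
    have := Real.GammaIntegral_convergent (s := α / 2 + 1) (by linarith)
    simpa using this
  have hcont : ContinuousOn
      (fun u : ℝ => Real.logb 2 (1 + (u / c) ^ (α / 2)) * Real.exp (-u)) (Set.Ioi 0) := by
    apply ContinuousOn.mul
    · simp only [Real.logb]
      apply ContinuousOn.div_const
      apply ContinuousOn.log
      · exact continuousOn_const.add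
          ((continuousOn_id.div_const c).rpow_const
            (fun x hx => Or.inl (div_pos hx hc).ne'))
      · intro x hx
        have : (0:ℝ) ≤ (x / c) ^ (α / 2) :=
          Real.rpow_nonneg (div_nonneg (le_of_lt hx) hc.le) _
        linarith
    · exact (Real.continuous_exp.comp continuous_neg).continuousOn
  refine Integrable.mono' ((hGamma.const_mul ((c ^ (α / 2))⁻¹ * (Real.log 2)⁻¹))) 
    (hcont.aestronglyMeasurable measurableSet_Ioi) ?_
  filter_upwards [ae_restrict_mem measurableSet_Ioi] with u hu
  have hu0 : (0:ℝ) < u := hu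
  have hy : (0:ℝ) ≤ (u / c) ^ (α / 2) := Real.rpow_nonneg (div_nonneg hu0.le hc.le) _
  have hnn : 0 ≤ Real.logb 2 (1 + (u / c) ^ (α / 2)) * Real.exp (-u) :=
    mul_nonneg (Real.logb_nonneg one_lt_two (by linarith)) (Real.exp_pos _).le
  rw [Real.norm_of_nonneg hnn]
  have hlb : Real.logb 2 (1 + (u / c) ^ (α / 2)) ≤ (u / c) ^ (α / 2) / Real.log 2 := by
    rw [Real.logb]
    have h1 : Real.log (1 + (u / c) ^ (α / 2)) ≤ (u / c) ^ (α / 2) := by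
      have := Real.log_le_sub_one_of_pos (show (0:ℝ) < 1 + (u / c) ^ (α / 2) by linarith)
      linarith
    exact div_le_div_of_nonneg_right h1 hlog2.le
  have hstep : Real.logb 2 (1 + (u / c) ^ (α / 2)) * Real.exp (-u)
      ≤ (u / c) ^ (α / 2) / Real.log 2 * Real.exp (-u) :=
    mul_le_mul_of_nonneg_right hlb (Real.exp_pos _).le
  refine hstep.trans_eq ?_
  rw [Real.div_rpow hu0.le hc.le]
  have hcpow : (0:ℝ) < c ^ (α / 2) := Real.rpow_pos_of_pos hc _
  field_simp

private lemma aux_subst (α c : ℝ) (hα : 2 < α) (hc : 0 < c) :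
    (∫ x in Set.Ioi (0:ℝ),
        Real.logb 2 (1 + x) * (2 * c * x ^ (2 / α) / (α * x))
          * Real.exp (-(c * x ^ (2 / α))))
      = ∫ u in Set.Ioi (0:ℝ), Real.logb 2 (1 + (u / c) ^ (α / 2)) * Real.exp (-u) := by
  have hα0 : (0:ℝ) < α := by linarith
  have hp : (0:ℝ) < 2 / α := by positivity
  set g : ℝ → ℝ := fun y => c * (Real.logb 2 (1 + y ^ (α / 2)) * Real.exp (-(c * y))) with hg
  have step1 : (∫ x in Set.Ioi (0:ℝ),
        Real.logb 2 (1 + x) * (2 * c * x ^ (2 / α) / (α * x))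
          * Real.exp (-(c * x ^ (2 / α))))
      = ∫ x in Set.Ioi (0:ℝ), (2 / α * x ^ (2 / α - 1)) • g (x ^ (2 / α)) := by
    refine setIntegral_congr_fun measurableSet_Ioi (fun x hx => ?_)
    have hx0 : (0:ℝ) < x := hx
    have h1 : (x ^ (2 / α)) ^ (α / 2) = x := by
      rw [← Real.rpow_mul hx0.le]
      have : 2 / α * (α / 2) = 1 := by field_simp
      rw [this, Real.rpow_one]
    have h2 : x ^ (2 / α - 1) = x ^ (2 / α) / x := Real.rpow_sub_one hx0.ne' _
    rw [smul_eq_mul, hg]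
    simp only [h1, h2]
    field_simp
  rw [step1, integral_comp_rpow_Ioi_of_pos hp]
  have hgform : g = fun y => (fun u : ℝ =>
      c * (Real.logb 2 (1 + (u / c) ^ (α / 2)) * Real.exp (-u))) (c * y) := by
    funext y
    simp only [hg, mul_div_cancel_left₀ _ hc.ne']
  rw [hgform, integral_comp_mul_left_Ioi _ _ hc]
  rw [mul_zero]
  rw [integral_const_mul]
  rw [smul_eq_mul, ← mul_assoc, inv_mul_cancel₀ hc.ne', one_mul]

theorem stmt_8 (d α : ℝ) (hd : 0 < d) (hα : 2 < α) :
    StrictAntiOn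
      (fun lam : ℝ => ∫ x in Set.Ioi (0:ℝ),
        Real.logb 2 (1 + x) * (2 * lam * π * d ^ 2 * x ^ (2 / α) / (α * x))
          * Real.exp (-(lam * π * d ^ 2 * x ^ (2 / α))))
      (Set.Ioi 0) := by
  intro lam1 h1 lam2 h2 hlt
  have h1' : (0:ℝ) < lam1 := h1
  have h2' : (0:ℝ) < lam2 := h2
  have hk : (0:ℝ) < π * d ^ 2 := by positivity
  set c1 := lam1 * π * d ^ 2 with hc1
  set c2 := lam2 * π * d ^ 2 with hc2
  have hc1p : 0 < c1 := by positivity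
  have hc2p : 0 < c2 := by positivity
  have hcc : c1 < c2 := by
    rw [hc1, hc2, mul_assoc, mul_assoc]
    exact mul_lt_mul_of_pos_right hlt hk
  have rw1 : ∀ lam : ℝ, (fun x : ℝ =>
        Real.logb 2 (1 + x) * (2 * lam * π * d ^ 2 * x ^ (2 / α) / (α * x))
          * Real.exp (-(lam * π * d ^ 2 * x ^ (2 / α))))
      = fun x : ℝ =>
        Real.logb 2 (1 + x) * (2 * (lam * π * d ^ 2) * x ^ (2 / α) / (α * x))
          * Real.exp (-(lam * π * d ^ 2 * x ^ (2 / α))) := by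
    intro lam; funext x; ring_nf
  simp only [rw1 lam1, rw1 lam2]
  rw [show lam1 * π * d ^ 2 = c1 from rfl, show lam2 * π * d ^ 2 = c2 from rfl]
  rw [aux_subst α c1 hα hc1p, aux_subst α c2 hα hc2p]
  -- strict comparison of the two integrals
  have hint1 := aux_integrable α c1 hα hc1p
  have hint2 := aux_integrable α c2 hα hc2p
  have hlt_pt : ∀ u ∈ Set.Ioi (0:ℝ),
      Real.logb 2 (1 + (u / c2) ^ (α / 2)) * Real.exp (-u)
        < Real.logb 2 (1 + (u / c1) ^ (α / 2)) * Real.exp (-u) := by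
    intro u hu
    have hu0 : (0:ℝ) < u := hu
    have hdiv : u / c2 < u / c1 := div_lt_div_of_pos_left hu0 hc1p hcc
    have hr : (u / c2) ^ (α / 2) < (u / c1) ^ (α / 2) :=
      Real.rpow_lt_rpow (div_nonneg hu0.le hc2p.le) hdiv (by linarith)
    have hpos2 : (0:ℝ) < 1 + (u / c2) ^ (α / 2) := by
      have : (0:ℝ) ≤ (u / c2) ^ (α / 2) := Real.rpow_nonneg (div_nonneg hu0.le hc2p.le) _
      linarith
    exact mul_lt_mul_of_pos_right
      (Real.logb_lt_logb one_lt_two hpos2 (by linarith)) (Real.exp_pos _)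
  set f1 : ℝ → ℝ := fun u => Real.logb 2 (1 + (u / c1) ^ (α / 2)) * Real.exp (-u) with hf1
  set f2 : ℝ → ℝ := fun u => Real.logb 2 (1 + (u / c2) ^ (α / 2)) * Real.exp (-u) with hf2
  have hsub : 0 < ∫ u in Set.Ioi (0:ℝ), (f1 u - f2 u) := by
    rw [setIntegral_pos_iff_support_of_nonneg_ae]
    · have hsupp : Set.Ioi (0:ℝ) ⊆ Function.support (fun u => f1 u - f2 u) := by
        intro u hu
        exact sub_ne_zero_of_ne (hlt_pt u hu).ne'
      rw [Set.inter_eq_self_of_subset_right hsupp]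
      simp
    · filter_upwards [ae_restrict_mem measurableSet_Ioi] with u hu
      exact sub_nonneg.mpr (hlt_pt u hu).le
    · exact hint1.sub hint2
  have := MeasureTheory.integral_sub hint1 hint2
  rw [this] at hsub
  linarith
end

section
/- Fix $n\in\mathbb{N}$, $\lambda>0$, $d>0$, $\alpha>2$. If $\beta$ has pdf $f_\beta(x) = \frac{2\lambda\pi d^2 x^{2/\alpha}}{\alpha x}e^{-\lambda\pi d^2(x^{2/\alpha}-1)}$ for $x>1$ (and 0 for $x\leq 1$), then $R = \frac{1}{1+n}\log_2(1+(1+n)\beta)$ has pdf $f_R(x) = \ln 4\cdot\frac{2^{(1+n)x}\lambda\pi d^2}{\alpha}\left(\frac{2^{(1+n)x}-1}{1+n}\right)^{2/\alpha - 1} e^{-\lambda\pi d^2\left(\left(\frac{2^{(1+n)x}-1}{1+n}\right)^{2/\alpha}-1\right)}$ for $x > \frac{\log_2(2+n)}{1+n}$. -/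
open Real MeasureTheory Set Filter

/-- `X` has probability density function `f` under measure `μ`. -/
def HasPDF' {Ω : Type*} [MeasurableSpace Ω] (μ : Measure Ω) (X : Ω → ℝ) (f : ℝ → ℝ) : Prop :=
  ∀ s : Set ℝ, MeasurableSet s → μ (X ⁻¹' s) = ENNReal.ofReal (∫ x in s, f x)

/-!
With `N = 1 + n`, the rate `R = log₂ (1 + N β) / N` is an increasing function of `β` with
inverse `x ↦ (2 ^ (N x) - 1) / N`, which maps `(log₂ (1 + N) / N, ∞)` onto the support
`(1, ∞)` of `f_β`. By the one-dimensional change of variables formula `R` has density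
`log 2 · 2 ^ (N x) · f_β ((2 ^ (N x) - 1) / N)` there, which is the stated one because
`log 4 = 2 log 2`.
-/

theorem HasPDF'.comp_of_leftInvOn {Ω : Type*} [MeasurableSpace Ω] {μ : Measure Ω}
    {X : Ω → ℝ} {f g h h' : ℝ → ℝ} {U V : Set ℝ}
    (hX : HasPDF' μ X (U.indicator f)) (hU : MeasurableSet U) (hV : MeasurableSet V)
    (hg : Measurable g) (hinv : LeftInvOn g h V) (himage : h '' V = U)
    (hderiv : ∀ x ∈ V, HasDerivWithinAt h (h' x) V x) :
    HasPDF' μ (g ∘ X) (V.indicator fun x => |h' x| * f (h x)) := by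
  intro s hs
  rw [preimage_comp, hX _ (hg hs), setIntegral_indicator hU, setIntegral_indicator hV,
    ← himage, ← hinv.image_inter', integral_image_eq_integral_abs_deriv_smul (hs.inter hV)
      (fun x hx => (hderiv x hx.2).mono inter_subset_right) (hinv.injOn.mono inter_subset_right)]
  rfl

theorem ite_lt_eq_indicator_Ioi (a : ℝ) (f : ℝ → ℝ) :
    (fun x => if a < x then f x else 0) = (Ioi a).indicator f := by
  funext x
  simp only [indicator_apply, mem_Ioi]

namespace OptDecoding

noncomputable def rate (N y : ℝ) : ℝ := 1 / N * logb 2 (1 + N * y)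

noncomputable def rateInv (N x : ℝ) : ℝ := ((2 : ℝ) ^ (N * x) - 1) / N

variable {N : ℝ}

theorem measurable_rate : Measurable (rate N) := by
  unfold rate logb
  fun_prop

theorem rate_rateInv (hN : N ≠ 0) (x : ℝ) : rate N (rateInv N x) = x := by
  have h : 1 + N * rateInv N x = (2 : ℝ) ^ (N * x) := by
    unfold rateInv
    field_simp
    ring
  rw [rate, h, logb_rpow two_pos one_lt_two.ne']
  field_simp

theorem rateInv_rate (hN : N ≠ 0) {y : ℝ} (hy : 0 < 1 + N * y) : rateInv N (rate N y) = y := by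
  have h : N * rate N y = logb 2 (1 + N * y) := by
    unfold rate
    field_simp
  rw [rateInv, h, rpow_logb two_pos one_lt_two.ne' hy]
  field_simp
  ring

theorem strictMono_rateInv (hN : 0 < N) : StrictMono (rateInv N) := by
  intro a b hab
  have h : (2 : ℝ) ^ (N * a) < 2 ^ (N * b) :=
    rpow_lt_rpow_of_exponent_lt one_lt_two (mul_lt_mul_of_pos_left hab hN)
  exact div_lt_div_of_pos_right (sub_lt_sub_right h 1) hN

theorem hasDerivAt_rateInv (hN : N ≠ 0) (x : ℝ) :
    HasDerivAt (rateInv N) (log 2 * (2 : ℝ) ^ (N * x)) x := by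
  have h := (((hasDerivAt_id x).const_mul N).const_rpow two_pos).sub_const 1 |>.div_const N
  refine h.congr_deriv ?_
  simp only [id, mul_one]
  field_simp

theorem rate_lt_rate (hN : 0 < N) {y z : ℝ} (hy : 0 < 1 + N * y) (hyz : y < z) :
    rate N y < rate N z := by
  rw [← (strictMono_rateInv hN).lt_iff_lt, rateInv_rate hN.ne' hy,
    rateInv_rate hN.ne' (by nlinarith)]
  exact hyz

theorem image_rateInv_Ioi (hN : 0 < N) : rateInv N '' Ioi (rate N 1) = Ioi 1 := by
  have h1 : 0 < 1 + N * 1 := by linarith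
  refine BijOn.image_eq (InvOn.bijOn (f' := rate N) ⟨fun x _ => rate_rateInv hN.ne' x,
    fun y hy => rateInv_rate hN.ne' (by nlinarith [mem_Ioi.mp hy])⟩ ?_ ?_)
  · intro x hx
    rw [mem_Ioi, ← rateInv_rate hN.ne' h1]
    exact strictMono_rateInv hN hx
  · intro y hy
    exact rate_lt_rate hN h1 hy

end OptDecoding

open OptDecoding in
theorem stmt_16_general {Ω : Type*} [MeasurableSpace Ω] (μ : Measure Ω)
    (n : ℕ) (lam d α : ℝ)
    (β : Ω → ℝ)
    (h : HasPDF' μ β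
      (fun x => if 1 < x then
          2 * lam * π * d ^ 2 * x ^ (2 / α) / (α * x)
            * Real.exp (-(lam * π * d ^ 2 * (x ^ (2 / α) - 1)))
        else 0)) :
    HasPDF' μ (fun ω => 1 / (1 + (n:ℝ)) * Real.logb 2 (1 + (1 + (n:ℝ)) * β ω))
      (fun x => if Real.logb 2 (2 + (n:ℝ)) / (1 + (n:ℝ)) < x then
          Real.log 4 * ((2:ℝ) ^ ((1 + (n:ℝ)) * x) * lam * π * d ^ 2 / α)
            * (((2:ℝ) ^ ((1 + (n:ℝ)) * x) - 1) / (1 + (n:ℝ))) ^ (2 / α - 1)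
            * Real.exp (-(lam * π * d ^ 2
                * ((((2:ℝ) ^ ((1 + (n:ℝ)) * x) - 1) / (1 + (n:ℝ))) ^ (2 / α) - 1)))
        else 0) := by
  have hN : (0 : ℝ) < 1 + n := by positivity
  rw [ite_lt_eq_indicator_Ioi] at h
  have hR := h.comp_of_leftInvOn measurableSet_Ioi measurableSet_Ioi measurable_rate
    (fun x _ => rate_rateInv hN.ne' x) (image_rateInv_Ioi hN)
    (fun x _ => (hasDerivAt_rateInv hN.ne' x).hasDerivWithinAt)
  have hthreshold : logb 2 (2 + n) / (1 + n) = rate (1 + n) 1 := by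
    rw [rate]
    ring_nf
  rw [ite_lt_eq_indicator_Ioi, hthreshold]
  change HasPDF' μ (rate (1 + n) ∘ β) _
  convert hR using 1
  refine indicator_congr fun x hx => ?_
  have hy : 1 < rateInv (1 + n) x := by
    rw [← mem_Ioi, ← image_rateInv_Ioi hN]
    exact mem_image_of_mem _ hx
  unfold rateInv at hy ⊢
  rw [abs_of_pos (by positivity), log_four_eq, rpow_sub (one_pos.trans hy), rpow_one]
  field_simp

theorem stmt_16 {Ω : Type*} [MeasurableSpace Ω] (μ : Measure Ω) [IsProbabilityMeasure μ]
    (n : ℕ) (lam d α : ℝ) (hlam : 0 < lam) (hd : 0 < d) (hα : 2 < α)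
    (β : Ω → ℝ)
    (h : HasPDF' μ β
      (fun x => if 1 < x then
          2 * lam * π * d ^ 2 * x ^ (2 / α) / (α * x)
            * Real.exp (-(lam * π * d ^ 2 * (x ^ (2 / α) - 1)))
        else 0)) :
    HasPDF' μ (fun ω => 1 / (1 + (n:ℝ)) * Real.logb 2 (1 + (1 + (n:ℝ)) * β ω))
      (fun x => if Real.logb 2 (2 + (n:ℝ)) / (1 + (n:ℝ)) < x then
          Real.log 4 * ((2:ℝ) ^ ((1 + (n:ℝ)) * x) * lam * π * d ^ 2 / α)
            * (((2:ℝ) ^ ((1 + (n:ℝ)) * x) - 1) / (1 + (n:ℝ))) ^ (2 / α - 1)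
            * Real.exp (-(lam * π * d ^ 2
                * ((((2:ℝ) ^ ((1 + (n:ℝ)) * x) - 1) / (1 + (n:ℝ))) ^ (2 / α) - 1)))
        else 0) :=
  stmt_16_general μ n lam d α β h
end

section
/- For $\lambda>0$, $d>0$, $\alpha>2$, the function $f(x) = \frac{2\lambda\pi d^2 x^{2/\alpha}}{\alpha x}e^{-\lambda\pi d^2(x^{2/\alpha}-1)}$ for $x>1$ (0 otherwise) is a probability density: $\int_1^\infty f(x)\,dx = 1$, and its mean is $\mathbb{E}[\beta] = (\lambda\pi d^2)^{-\alpha/2}\,\Gamma(1+\alpha/2,\lambda\pi d^2)\,e^{\lambda\pi d^2}$, where $\Gamma(z,a)=\int_a^\infty t^{z-1}e^{-t}dt$ is the upper incomplete Gamma function. -/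
open Real MeasureTheory Set Filter

/-- The upper incomplete Gamma function `Γ(z, a) = ∫_a^∞ t^(z-1) e^(-t) dt`. -/
noncomputable def upperGamma (z a : ℝ) : ℝ :=
  ∫ t in Set.Ioi a, t ^ (z - 1) * Real.exp (-t)

theorem stmt_17 (lam d α : ℝ) (hlam : 0 < lam) (hd : 0 < d) (hα : 2 < α) :
    (∫ x in Set.Ioi (1:ℝ),
        2 * lam * π * d ^ 2 * x ^ (2 / α) / (α * x)
          * Real.exp (-(lam * π * d ^ 2 * (x ^ (2 / α) - 1)))) = 1 ∧
    (∫ x in Set.Ioi (1:ℝ),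
        x * (2 * lam * π * d ^ 2 * x ^ (2 / α) / (α * x)
          * Real.exp (-(lam * π * d ^ 2 * (x ^ (2 / α) - 1)))))
      = (lam * π * d ^ 2) ^ (-(α / 2)) * upperGamma (1 + α / 2) (lam * π * d ^ 2)
          * Real.exp (lam * π * d ^ 2) := by
  have hα0 : (0:ℝ) < α := by linarith
  have hαne : α ≠ 0 := ne_of_gt hα0
  set c : ℝ := lam * π * d ^ 2 with hc_def
  have hc : 0 < c := by
    have := Real.pi_pos
    positivity
  set φ : ℝ → ℝ := fun x => c * x ^ (2 / α) with hφ_def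
  set φ' : ℝ → ℝ := fun x => c * (2 / α * x ^ (2 / α - 1)) with hφ'_def
  have hderiv : ∀ x ∈ Set.Ioi (1:ℝ), HasDerivWithinAt φ (φ' x) (Set.Ioi 1) x := by
    intro x hx
    have hx0 : x ≠ 0 := by
      have : (1:ℝ) < x := hx
      positivity
    exact ((Real.hasDerivAt_rpow_const (Or.inl hx0)).const_mul c).hasDerivWithinAt
  have hinj : Set.InjOn φ (Set.Ioi 1) := by
    intro x hx y hy h
    have hx0 : (0:ℝ) < x := lt_trans one_pos hx
    have hy0 : (0:ℝ) < y := lt_trans one_pos hy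
    have h2 : x ^ (2 / α) = y ^ (2 / α) := mul_left_cancel₀ (ne_of_gt hc) h
    have h3 : (x ^ (2 / α)) ^ (α / 2) = (y ^ (2 / α)) ^ (α / 2) := by rw [h2]
    rwa [← Real.rpow_mul hx0.le, ← Real.rpow_mul hy0.le,
      show (2 / α) * (α / 2) = 1 by field_simp, Real.rpow_one, Real.rpow_one] at h3
  have himg : φ '' Set.Ioi 1 = Set.Ioi c := by
    ext y
    constructor
    · rintro ⟨x, hx, rfl⟩
      have hx1 : (1:ℝ) < x := hx
      have : (1:ℝ) < x ^ (2 / α) :=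
        Real.one_lt_rpow_iff_of_pos (lt_trans one_pos hx1) |>.mpr
          (Or.inl ⟨hx1, by positivity⟩)
      simpa [hφ_def] using (mul_lt_mul_of_pos_left this hc : c * 1 < c * x ^ (2 / α))
    · intro hy
      have hy' : c < y := hy
      have hyc : (1:ℝ) < y / c := (one_lt_div hc).mpr hy'
      refine ⟨(y / c) ^ (α / 2), ?_, ?_⟩
      · exact Real.one_lt_rpow_iff_of_pos (by positivity) |>.mpr
          (Or.inl ⟨hyc, by positivity⟩)
      · show c * ((y / c) ^ (α / 2)) ^ (2 / α) = y
        rw [← Real.rpow_mul (by positivity),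
          show (α / 2) * (2 / α) = 1 by field_simp, Real.rpow_one]
        field_simp
  -- pointwise facts on Ioi 1
  have habs : ∀ x ∈ Set.Ioi (1:ℝ), |φ' x| = φ' x := by
    intro x hx
    have hx0 : (0:ℝ) < x := lt_trans one_pos hx
    have : 0 < φ' x := by
      have h1 : 0 < x ^ (2 / α - 1) := Real.rpow_pos_of_pos hx0 _
      have h2 : 0 < 2 / α := by positivity
      simp only [hφ'_def]
      positivity
    exact abs_of_pos this
  have hφ'eq : ∀ x ∈ Set.Ioi (1:ℝ), φ' x = 2 * c * x ^ (2 / α) / (α * x) := by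
    intro x hx
    have hx0 : (0:ℝ) < x := lt_trans one_pos hx
    simp only [hφ'_def]
    rw [Real.rpow_sub hx0, Real.rpow_one]
    field_simp
  constructor
  · -- total mass 1
    have key : (∫ s in Set.Ioi c, Real.exp c * Real.exp (-s))
        = ∫ x in Set.Ioi (1:ℝ), |φ' x| • (Real.exp c * Real.exp (-φ x)) := by
      rw [← himg]
      exact integral_image_eq_integral_abs_deriv_smul measurableSet_Ioi hderiv hinj _
    rw [MeasureTheory.integral_const_mul, integral_exp_neg_Ioi, ← Real.exp_add] at key
    simp only [add_neg_cancel, Real.exp_zero] at key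
    conv_rhs => rw [key]
    apply MeasureTheory.setIntegral_congr_fun measurableSet_Ioi
    intro x hx
    dsimp only
    rw [habs x hx, smul_eq_mul, hφ'eq x hx, ← Real.exp_add,
      show c + -φ x = -(c * (x ^ (2/α) - 1)) by simp only [hφ_def]; ring,
      hc_def]
    ring
  · -- mean
    have hΓ : upperGamma (1 + α / 2) c = ∫ s in Set.Ioi c, s ^ (α / 2) * Real.exp (-s) := by
      unfold upperGamma
      norm_num
    have key : (∫ s in Set.Ioi c, s ^ (α / 2) * Real.exp (-s))
        = ∫ x in Set.Ioi (1:ℝ), |φ' x| • ((φ x) ^ (α / 2) * Real.exp (-φ x)) := by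
      rw [← himg]
      exact integral_image_eq_integral_abs_deriv_smul measurableSet_Ioi hderiv hinj _
    have hpt : ∀ x ∈ Set.Ioi (1:ℝ),
        |φ' x| • ((φ x) ^ (α / 2) * Real.exp (-φ x))
          = c ^ (α / 2) * Real.exp (-c) *
            (x * (2 * lam * π * d ^ 2 * x ^ (2 / α) / (α * x)
              * Real.exp (-(c * (x ^ (2 / α) - 1))))) := by
      intro x hx
      have hx0 : (0:ℝ) < x := lt_trans one_pos hx
      have hφx : (φ x) ^ (α / 2) = c ^ (α / 2) * x := by
        simp only [hφ_def]
        rw [Real.mul_rpow hc.le (by positivity), ← Real.rpow_mul hx0.le,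
          show (2 / α) * (α / 2) = 1 by field_simp, Real.rpow_one]
      have hexp : Real.exp (-φ x)
          = Real.exp (-c) * Real.exp (-(c * (x ^ (2 / α) - 1))) := by
        rw [← Real.exp_add]
        congr 1
        simp only [hφ_def]
        ring
      rw [habs x hx, smul_eq_mul, hφ'eq x hx, hφx, hexp, hc_def]
      ring
    rw [MeasureTheory.setIntegral_congr_fun measurableSet_Ioi hpt,
      MeasureTheory.integral_const_mul] at key
    have hcne : c ^ (α / 2) ≠ 0 := ne_of_gt (Real.rpow_pos_of_pos hc _)
    rw [hΓ, key, Real.rpow_neg hc.le]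
    rw [show ((c ^ (α / 2))⁻¹ *
        (c ^ (α / 2) * Real.exp (-c) *
          ∫ x in Set.Ioi (1:ℝ),
            x * (2 * lam * π * d ^ 2 * x ^ (2 / α) / (α * x)
              * Real.exp (-(c * (x ^ (2 / α) - 1))))) * Real.exp c)
      = ((c ^ (α / 2))⁻¹ * c ^ (α / 2)) * (Real.exp (-c) * Real.exp c) *
          ∫ x in Set.Ioi (1:ℝ),
            x * (2 * lam * π * d ^ 2 * x ^ (2 / α) / (α * x)
              * Real.exp (-(c * (x ^ (2 / α) - 1)))) from by ring,
      inv_mul_cancel₀ hcne, ← Real.exp_add, neg_add_cancel, Real.exp_zero,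
      one_mul, one_mul]
end
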